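/- arXiv:2605.08367 — 2 statements merged into one kernel-verified Lean document; each statement's English description precedes it below -/
import Mathlib

section
/- Let f(u) = u and g(u) = -(1/2)((u² + 2u)/(1+u) - 2 ln(1+u)) for u > 0. Then the meridian curvature κ_m(u) = (f'g'' - g'f'')/(-2f'g')^{3/2} equals -1/u², and moreover -f'(u)g'(u) > 0 for all u > 0. -/
open Real

lemma hasDerivAt_g_aux (g : ℝ → ℝ)
    (hg : ∀ u, g u = -(1/2) * ((u^2 + 2*u)/(1+u) - 2 * Real.log (1+u)))
    {x : ℝ} (hx : -1 < x) :
    HasDerivAt g (-x^2/(2*(1+x)^2)) x := by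
  have hne : 1 + x ≠ 0 := by linarith
  have h1 : HasDerivAt (fun u : ℝ => u^2 + 2*u) (2*x + 2) x := by
    have := (hasDerivAt_pow 2 x).add ((hasDerivAt_id x).const_mul 2)
    simp at this; exact this
  have h2 : HasDerivAt (fun u : ℝ => 1 + u) 1 x := by
    simpa using (hasDerivAt_id x).const_add 1
  have h3 := h1.div h2 hne
  have h4 : HasDerivAt (fun u : ℝ => Real.log (1+u)) (1/(1+x)) x := by
    simpa using h2.log hne
  have h5 := (h3.sub (h4.const_mul 2)).const_mul (-(1/2) : ℝ)
  have hgf : g = fun u : ℝ => -(1/2) * ((u^2 + 2*u)/(1+u) - 2 * Real.log (1+u)) :=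
    funext hg
  rw [hgf]
  refine h5.congr_deriv ?_
  field_simp
  ring

lemma hasDerivAt_g' {x : ℝ} (hx : -1 < x) :
    HasDerivAt (fun u : ℝ => -u^2/(2*(1+u)^2)) (-x/(1+x)^3) x := by
  have h1x : (1:ℝ)+x ≠ 0 := by linarith
  have hne : 2*(1+x)^2 ≠ 0 := by positivity
  have h1 : HasDerivAt (fun u : ℝ => -u^2) (-(2*x)) x := by
    have := (hasDerivAt_pow 2 x).neg; simp at this; exact this
  have h2 : HasDerivAt (fun u : ℝ => 2*(1+u)^2) (2*(2*(1+x))) x := by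
    have hb : HasDerivAt (fun u : ℝ => 1 + u) 1 x := by
      simpa using (hasDerivAt_id x).const_add 1
    simpa using (hb.pow 2).const_mul 2
  have h3 := h1.div h2 hne
  refine h3.congr_deriv ?_
  field_simp
  ring

theorem stmt7 (f g : ℝ → ℝ)
    (hf : ∀ u, f u = u)
    (hg : ∀ u, g u = -(1/2) * ((u^2 + 2*u)/(1+u) - 2 * Real.log (1+u))) :
    ∀ u : ℝ, 0 < u →
      (-(deriv f u * deriv g u) > 0) ∧
      (deriv f u * deriv (deriv g) u - deriv g u * deriv (deriv f) u)
          / ((-(2 * deriv f u * deriv g u)) ^ ((3 : ℝ)/2)) = -(1 / u^2) := by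
  intro u hu
  have hfe : f = fun u : ℝ => u := funext hf
  have hdf : deriv f = fun _ : ℝ => 1 := by
    funext x; rw [hfe]; simp
  have hdfu : deriv f u = 1 := by rw [hdf]
  have hddf : deriv (deriv f) u = 0 := by
    rw [hdf]; simp
  have h1u : -1 < u := by linarith
  have h1x : (1:ℝ) + u ≠ 0 := by linarith
  have hdg : deriv g u = -u^2/(2*(1+u)^2) := (hasDerivAt_g_aux g hg h1u).deriv
  have heq : deriv g =ᶠ[nhds u] fun x : ℝ => -x^2/(2*(1+x)^2) := by
    filter_upwards [isOpen_Ioi.mem_nhds (show u ∈ Set.Ioi (-1:ℝ) from h1u)] with x hx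
    exact (hasDerivAt_g_aux g hg hx).deriv
  have hddg : deriv (deriv g) u = -u/(1+u)^3 := by
    rw [heq.deriv_eq]
    exact (hasDerivAt_g' h1u).deriv
  have hpos : -(deriv f u * deriv g u) > 0 := by
    rw [hdfu, hdg]
    have : -(1 * (-u^2/(2*(1+u)^2))) = u^2/(2*(1+u)^2) := by ring
    rw [this]; positivity
  refine ⟨hpos, ?_⟩
  rw [hddg, hddf, hdfu, hdg]
  have hbase : -(2 * (1:ℝ) * (-u^2/(2*(1+u)^2))) = (u/(1+u))^2 := by
    field_simp
  rw [hbase]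
  have ha : (0:ℝ) < u/(1+u) := by positivity
  have hrw : ((u/(1+u))^2 : ℝ) ^ ((3:ℝ)/2) = (u/(1+u))^3 := by
    rw [← Real.rpow_natCast (u/(1+u)) 2, ← Real.rpow_mul ha.le]
    norm_num
  rw [hrw]
  field_simp
  ring
end

section
/- For the surface z(u,v) = f(u)ω(v)cos(v) e₁ + f(u)ω(v)sin(v) e₂ + (f(u)ω(v)²/2 + g(u)) ξ₁ + f(u) ξ₂ in Minkowski space ℝ⁴₁, with f(u) = u, g(u) = -(1/2)((u²+2u)/(1+u) - 2ln(1+u)), ω(v) = 2cos v, the coefficients of the first fundamental form are E = ⟨z_u, z_u⟩ = u²/(u+1)², F = ⟨z_u, z_v⟩ = 0, G = ⟨z_v, z_v⟩ = 4u², where ⟨·,·⟩ is the Minkowski inner product. -/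
/-!
Write the surface as `z(u,v) = f(u) x(v) + g(u) ξ₁` with
`x(v) = ω cos v e₁ + ω sin v e₂ + (ω²/2) ξ₁ + ξ₂`, a curve on the light cone (`⟨x, x⟩ = 0`).
Hence for arbitrary differentiable `f`, `g`, `ω` one gets `E = -2 f' g'`, `F = 0` and
`G = f² (ω'² + ω²)`. For the given data `f' = 1`, `g' = -u²/(2(1+u)²)` and `ω'² + ω² = 4`.
-/

open Real

/-- Minkowski inner product in the pseudo-orthonormal basis {e₁, e₂, ξ₁, ξ₂}:
coordinates a = a₀ e₁ + a₁ e₂ + a₂ ξ₁ + a₃ ξ₂, with ⟨e₁,e₁⟩ = ⟨e₂,e₂⟩ = 1,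
⟨ξ₁,ξ₁⟩ = ⟨ξ₂,ξ₂⟩ = 0, ⟨ξ₁,ξ₂⟩ = -1, e's orthogonal to ξ's. -/
def mink (a b : Fin 4 → ℝ) : ℝ :=
  a 0 * b 0 + a 1 * b 1 - a 2 * b 3 - a 3 * b 2

noncomputable def coneSurface (f g ω : ℝ → ℝ) (u v : ℝ) : Fin 4 → ℝ :=
  ![f u * ω v * cos v, f u * ω v * sin v, f u * (ω v) ^ 2 / 2 + g u, f u]

section

variable {f g ω : ℝ → ℝ} {f' g' ω' u v : ℝ}

theorem hasDerivAt_coneSurface_fst (hf : HasDerivAt f f' u) (hg : HasDerivAt g g' u) :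
    HasDerivAt (fun x => coneSurface f g ω x v)
      ![f' * ω v * cos v, f' * ω v * sin v, f' * (ω v) ^ 2 / 2 + g', f'] u := by
  refine hasDerivAt_pi.2 fun i => ?_
  fin_cases i
  · exact (hf.mul_const _).mul_const _
  · exact (hf.mul_const _).mul_const _
  · exact ((hf.mul_const _).div_const _).add hg
  · exact hf

theorem hasDerivAt_coneSurface_snd (hω : HasDerivAt ω ω' v) :
    HasDerivAt (fun y => coneSurface f g ω u y)
      ![f u * (ω' * cos v - ω v * sin v), f u * (ω' * sin v + ω v * cos v),
        f u * ω v * ω', 0] v := by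
  refine hasDerivAt_pi.2 fun i => ?_
  fin_cases i
  · refine ((hω.const_mul (f u)).mul (hasDerivAt_cos v)).congr_deriv ?_
    simp only [mul_neg, Fin.zero_eta, Fin.isValue, Matrix.cons_val_zero]; ring
  · refine ((hω.const_mul (f u)).mul (hasDerivAt_sin v)).congr_deriv ?_
    simp only [Fin.mk_one, Fin.isValue, Matrix.cons_val_one, Matrix.cons_val_zero]; ring
  · refine (((hω.pow 2).const_mul (f u)).div_const 2).add_const (g u) |>.congr_deriv ?_
    simp only [Nat.cast_ofNat, Nat.add_one_sub_one, pow_one, Fin.reduceFinMk, Matrix.cons_val]; ring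
  · exact hasDerivAt_const v (f u)

theorem coneSurface_firstFundamentalForm (hf : HasDerivAt f f' u) (hg : HasDerivAt g g' u)
    (hω : HasDerivAt ω ω' v) :
    let zu : Fin 4 → ℝ := fun i => deriv (fun x => coneSurface f g ω x v i) u
    let zv : Fin 4 → ℝ := fun i => deriv (fun y => coneSurface f g ω u y i) v
    mink zu zu = -2 * f' * g' ∧ mink zu zv = 0 ∧ mink zv zv = f u ^ 2 * (ω' ^ 2 + ω v ^ 2) := by
  have hzu := fun i =>
    (hasDerivAt_pi.1 (hasDerivAt_coneSurface_fst (ω := ω) (v := v) hf hg) i).deriv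
  have hzv := fun i =>
    (hasDerivAt_pi.1 (hasDerivAt_coneSurface_snd (f := f) (g := g) (u := u) hω) i).deriv
  simp only [mink, hzu, hzv, Fin.isValue, Matrix.cons_val_zero, Matrix.cons_val_one,
    Matrix.cons_val, neg_mul, mul_zero, sub_zero, zero_mul]
  have pyth := sin_sq_add_cos_sq v
  refine ⟨?_, ?_, ?_⟩
  · linear_combination f' ^ 2 * ω v ^ 2 * pyth
  · linear_combination f' * f u * ω v * ω' * pyth
  · linear_combination f u ^ 2 * (ω' ^ 2 + ω v ^ 2) * pyth

end

theorem hasDerivAt_div_sub_two_mul_log {u : ℝ} (hu : 1 + u ≠ 0) :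
    HasDerivAt (fun x => (x ^ 2 + 2 * x) / (1 + x) - 2 * log (1 + x)) (u ^ 2 / (1 + u) ^ 2) u := by
  have hden : HasDerivAt (fun x : ℝ => 1 + x) 1 u := (hasDerivAt_id u).const_add 1
  have hnum : HasDerivAt (fun x : ℝ => x ^ 2 + 2 * x) (2 * u + 2) u := by
    refine ((hasDerivAt_pow 2 u).add ((hasDerivAt_id' u).const_mul 2)).congr_deriv ?_
    ring
  refine ((hnum.div hden hu).sub (((hasDerivAt_log hu).comp u hden).const_mul 2)).congr_deriv ?_
  field_simp
  ring

theorem stmt8 (f g ω : ℝ → ℝ)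
    (hf : ∀ u, f u = u)
    (hg : ∀ u, g u = -(1/2) * ((u^2 + 2*u)/(1+u) - 2 * Real.log (1+u)))
    (hω : ∀ v, ω v = 2 * Real.cos v)
    (z : ℝ × ℝ → Fin 4 → ℝ)
    (hz : ∀ p : ℝ × ℝ, z p =
      ![f p.1 * ω p.2 * Real.cos p.2,
        f p.1 * ω p.2 * Real.sin p.2,
        f p.1 * (ω p.2)^2 / 2 + g p.1,
        f p.1])
    (zu zv : ℝ × ℝ → Fin 4 → ℝ)
    (hzu : ∀ p i, zu p i = deriv (fun x => z (x, p.2) i) p.1)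
    (hzv : ∀ p i, zv p i = deriv (fun y => z (p.1, y) i) p.2) :
    ∀ p : ℝ × ℝ, 0 < p.1 → Real.cos p.2 ≠ 0 →
      mink (zu p) (zu p) = p.1^2 / (p.1 + 1)^2
      ∧ mink (zu p) (zv p) = 0
      ∧ mink (zv p) (zv p) = 4 * p.1^2 := by
  rintro ⟨u, v⟩ hu -
  have hz' : z = fun p => coneSurface f g ω p.1 p.2 := funext hz
  have hzu' : zu (u, v) = fun i => deriv (fun x => coneSurface f g ω x v i) u :=
    funext fun i => by rw [hzu, hz']
  have hzv' : zv (u, v) = fun i => deriv (fun y => coneSurface f g ω u y i) v :=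
    funext fun i => by rw [hzv, hz']
  have hf' : HasDerivAt f 1 u := by rw [show f = id from funext hf]; exact hasDerivAt_id u
  have hg' : HasDerivAt g (-(1 / 2) * (u ^ 2 / (1 + u) ^ 2)) u := by
    rw [funext hg]; exact (hasDerivAt_div_sub_two_mul_log (by positivity)).const_mul _
  have hω' : HasDerivAt ω (2 * -sin v) v := by
    rw [funext hω]; exact (hasDerivAt_cos v).const_mul 2
  obtain ⟨hE, hF, hG⟩ := coneSurface_firstFundamentalForm hf' hg' hω'
  rw [hzu', hzv']
  refine ⟨?_, hF, ?_⟩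
  · rw [hE, add_comm u]; ring
  · rw [hG, hf, hω]; linear_combination 4 * u ^ 2 * sin_sq_add_cos_sq v
end
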